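/- For every n ≥ 2, s^{(2)}_n = s^{(2)}_{n−1} + 2·W((s^{(2)}_n − 1)/2). -/

import Mathlib

/-- Moser function `m_r(n)`: reinterpret the base-`r` digits of `n` as base-`r²` digits,
i.e. `m_r(n) = Σ_i ν_i r^(2i)` where `n = Σ_i ν_i r^i` is the base-`r` expansion. -/
def moser (r n : ℕ) : ℕ := Nat.ofDigits (r ^ 2) (Nat.digits r n)

/-- `s^(r)_n = r · m_r(n−1) + 1` for `n ≥ 1`. -/
def moserS (r n : ℕ) : ℕ := r * moser r (n - 1) + 1

/-- The `i`-th base-`r` digit of `n` (0 if beyond the expansion). -/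
def dig (r n i : ℕ) : ℕ := (Nat.digits r n).getD i 0

/-- Josephus–Groër survivor function: with `M = N` if `N` is odd, `M = N − 1` otherwise,
and `M = Σ_j b_j 2^j` the binary expansion, `W(N) = 1 + Σ_{j odd} b_j 2^j`. -/
def W (N : ℕ) : ℕ :=
  let M := if N % 2 = 1 then N else N - 1
  1 + ((((Nat.digits 2 M).zipIdx.map Prod.swap).filter (fun p => p.1 % 2 = 1)).map (fun p => p.2 * 2 ^ p.1)).sum

/-! With `f = moser 2` one has `f (c + 2 * y) = c + 4 * f y` for a bit `c`, so the binary digits of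
`f k` all sit at even positions. Write `O x` and `E x` for the parts of `x` carried by its odd- and
even-position binary digits; then `O (c + 2 * y) = 2 * E y` and `E (c + 2 * y) = c + 2 * O y`. In
particular `O` ignores the last bit, so `W N = 1 + O (N - 1)`, and the theorem becomes
`f (k + 1) = f k + 1 + O (f (k + 1) - 1)`. This follows by induction on `k`: for even `k`,
`f (k + 1) - 1 = 4 * f (k / 2)` has no odd-position digits, while for `k = 2 * j + 1`,
`f (k + 1) - 1 = 3 + 4 * (f (j + 1) - 1)` and the step at `j` applies. -/

def oddDigitSum (b : ℕ) (l : List ℕ) : ℕ :=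
  (((l.zipIdx.map Prod.swap).filter (fun p => p.1 % 2 = 1)).map (fun p => p.2 * b ^ p.1)).sum

def evenDigitSum (b : ℕ) (l : List ℕ) : ℕ :=
  (((l.zipIdx.map Prod.swap).filter (fun p => p.1 % 2 = 0)).map (fun p => p.2 * b ^ p.1)).sum

theorem oddDigitSum_cons (b a : ℕ) (l : List ℕ) :
    oddDigitSum b (a :: l) = b * evenDigitSum b l := by
  simp [oddDigitSum, evenDigitSum, List.zipIdx_succ, List.filter_map, Function.comp_def,
    Nat.succ_mod_two_eq_one_iff, pow_succ', ← List.sum_map_mul_left, mul_left_comm]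

theorem evenDigitSum_cons (b a : ℕ) (l : List ℕ) :
    evenDigitSum b (a :: l) = a + b * oddDigitSum b l := by
  simp [oddDigitSum, evenDigitSum, List.zipIdx_succ, List.filter_map, Function.comp_def,
    Nat.succ_mod_two_eq_zero_iff, pow_succ', ← List.sum_map_mul_left, mul_left_comm]

theorem oddDigitSum_digits_add_mul {b c : ℕ} (hb : 1 < b) (hc : c < b) (y : ℕ) :
    oddDigitSum b (b.digits (c + b * y)) = b * evenDigitSum b (b.digits y) := by
  by_cases h : c = 0 ∧ y = 0
  · simp [h, oddDigitSum, evenDigitSum]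
  · rw [Nat.digits_add b hb c y hc (by tauto), oddDigitSum_cons]

theorem evenDigitSum_digits_add_mul {b c : ℕ} (hb : 1 < b) (hc : c < b) (y : ℕ) :
    evenDigitSum b (b.digits (c + b * y)) = c + b * oddDigitSum b (b.digits y) := by
  by_cases h : c = 0 ∧ y = 0
  · simp [h, oddDigitSum, evenDigitSum]
  · rw [Nat.digits_add b hb c y hc (by tauto), evenDigitSum_cons]

theorem W_eq_one_add_oddDigitSum (N : ℕ) : W N = 1 + oddDigitSum 2 (Nat.digits 2 (N - 1)) := by
  show 1 + oddDigitSum 2 _ = _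
  split_ifs with hN
  · have hodd : N = 1 + 2 * (N / 2) := by omega
    have heven : N - 1 = 0 + 2 * (N / 2) := by omega
    rw [hodd, oddDigitSum_digits_add_mul one_lt_two one_lt_two, ← hodd, heven,
      oddDigitSum_digits_add_mul one_lt_two two_pos]
  · rfl

theorem moser_add_mul {r c : ℕ} (hr : 1 < r) (hc : c < r) (y : ℕ) :
    moser r (c + r * y) = c + r ^ 2 * moser r y := by
  by_cases h : c = 0 ∧ y = 0
  · simp [h, moser]
  · rw [moser, Nat.digits_add r hr c y hc (by tauto), Nat.ofDigits_cons, moser]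

theorem le_moser (r n : ℕ) : n ≤ moser r n :=
  calc n = Nat.ofDigits r (r.digits n) := (Nat.ofDigits_digits r n).symm
    _ ≤ moser r n := Nat.ofDigits_monotone _ (Nat.le_self_pow two_ne_zero r)

theorem oddDigitSum_digits_moser {r : ℕ} (hr : 1 < r) (n : ℕ) :
    oddDigitSum r (r.digits (moser r n)) = 0 := by
  induction n using Nat.strong_induction_on with
  | _ n ih =>
    rcases eq_or_ne n 0 with rfl | hn
    · simp [moser, oddDigitSum]
    have hmod : n % r < r := Nat.mod_lt n (by omega)
    have hsplit : moser r n = n % r + r * (0 + r * moser r (n / r)) := by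
      conv_lhs => rw [← Nat.mod_add_div n r]
      rw [moser_add_mul hr hmod]
      ring
    rw [hsplit, oddDigitSum_digits_add_mul hr hmod, evenDigitSum_digits_add_mul hr (by omega),
      ih _ (Nat.div_lt_self (by omega) hr)]
    simp

theorem moser_two_succ (k : ℕ) :
    moser 2 (k + 1) = moser 2 k + 1 + oddDigitSum 2 (Nat.digits 2 (moser 2 (k + 1) - 1)) := by
  induction k using Nat.strong_induction_on with
  | _ k ih =>
    obtain ⟨j, rfl | rfl⟩ := Nat.even_or_odd' k
    · have hpred : 1 + 2 ^ 2 * moser 2 j - 1 = 0 + 2 * (0 + 2 * moser 2 j) := by omega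
      rw [add_comm (2 * j), moser_add_mul one_lt_two one_lt_two, ← zero_add (2 * j),
        moser_add_mul one_lt_two two_pos, hpred, oddDigitSum_digits_add_mul one_lt_two two_pos,
        evenDigitSum_digits_add_mul one_lt_two two_pos, oddDigitSum_digits_moser one_lt_two]
      omega
    · have hpos : 1 ≤ moser 2 (j + 1) := (le_moser 2 (j + 1)).trans' (Nat.le_add_left 1 j)
      have hpred : 0 + 2 ^ 2 * moser 2 (j + 1) - 1 = 1 + 2 * (1 + 2 * (moser 2 (j + 1) - 1)) := by
        omega
      rw [show 2 * j + 1 + 1 = 0 + 2 * (j + 1) by ring, moser_add_mul one_lt_two two_pos,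
        add_comm (2 * j), moser_add_mul one_lt_two one_lt_two, hpred,
        oddDigitSum_digits_add_mul one_lt_two one_lt_two,
        evenDigitSum_digits_add_mul one_lt_two one_lt_two]
      have hj := ih j (by omega)
      omega

/-- For every `n ≥ 2`, `s^(2)_n = s^(2)_{n−1} + 2·W((s^(2)_n − 1)/2)`. -/
theorem moserS_step_W (n : ℕ) (hn : 2 ≤ n) :
    moserS 2 n = moserS 2 (n - 1) + 2 * W ((moserS 2 n - 1) / 2) := by
  obtain ⟨k, rfl⟩ : ∃ k, n = k + 1 + 1 := ⟨n - 2, by omega⟩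
  have hstep := moser_two_succ k
  simp only [moserS, Nat.add_sub_cancel, Nat.mul_div_cancel_left _ two_pos,
    W_eq_one_add_oddDigitSum]
  omega
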